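/- Let n ≥ 6 be an integer. Let t₁ < t₂ < t₃ be the three roots of the cubic g₃(t) := 8(2n−1)(2n−3)(2n−5)·t³ + 12(n−3)(2n−3)(2n−5)·t² + 6(n−3)(n−4)(2n−5)·t + (n−3)(n−4)(n−5), let w₁ < w₂ be the roots of q₁(t) := 4(2n−3)(2n−5)·t² + 4(n−3)(2n−5)·t + (n−3)(n−4), i.e. w_{1,2} = −(n−3)/(2(2n−3)) ∓ √(3(n−3))/(2(2n−3)·√(2n−5)), and let z₁ < z₂ be the roots of q₂(t) := 4(2n−1)(2n−3)·t² + 4(n−3)(2n−3)·t + (n−3)(n−4), i.e. z_{1,2} = −(n−3)/(2(2n−1)) ∓ √(5(n−3))/(2(2n−1)·√(2n−3)). Then t₁ < w₁ < z₁ < t₂ < w₂ < z₂ < t₃. -/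
import Mathlib


/-- The cubic `g₃(t)`. -/
noncomputable def g3 (n : ℕ) (t : ℝ) : ℝ :=
  8 * (2 * (n : ℝ) - 1) * (2 * (n : ℝ) - 3) * (2 * (n : ℝ) - 5) * t ^ 3 +
  12 * ((n : ℝ) - 3) * (2 * (n : ℝ) - 3) * (2 * (n : ℝ) - 5) * t ^ 2 +
  6 * ((n : ℝ) - 3) * ((n : ℝ) - 4) * (2 * (n : ℝ) - 5) * t +
  ((n : ℝ) - 3) * ((n : ℝ) - 4) * ((n : ℝ) - 5)

private lemma aux_pos {p E : ℝ} (hp : 0 < p) (h : 0 < p * E) : 0 < E := by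
  by_contra hc
  push_neg at hc
  nlinarith [mul_nonpos_of_nonneg_of_nonpos hp.le hc]

private lemma aux_neg {p E : ℝ} (hp : 0 < p) (h : p * E < 0) : E < 0 := by
  by_contra hc
  push_neg at hc
  nlinarith [mul_nonneg hp.le hc]

private lemma sq_gap {p q u v : ℝ} (hu : 0 < u) (hv : 0 < v) (hp : 0 ≤ p)
    (h : q^2*v^2 < p^2*u^2) : q*v < p*u := by
  nlinarith [mul_pos hu hv, sq_nonneg (p*u - q*v), sq_nonneg (p*u + q*v), mul_nonneg hp hu.le]

private lemma gap1 {x a b : ℝ} (hx : 6 ≤ x) (ha2 : a^2 = 3*(x-3)) (hb2 : b^2 = 2*x-5)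
    (ha : 0 < a) (hb : 0 < b) : (2*x-9)*b < (2*x-7)*a := by
  apply sq_gap ha hb (by linarith)
  rw [ha2, hb2]
  nlinarith [mul_nonneg (mul_nonneg (by linarith : (0:ℝ) ≤ x-6) (by linarith : (0:ℝ) ≤ x-6)) (by linarith : (0:ℝ) ≤ x-6), sq_nonneg (x-6)]

private lemma gap2 {x a b : ℝ} (hx : 6 ≤ x) (ha2 : a^2 = 3*(x-3)) (hb2 : b^2 = 2*x-5)
    (ha : 0 < a) (hb : 0 < b) : 3*b < (2*x-5)*a := by
  have h3 : 3*b = 3*b := rfl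
  apply sq_gap ha hb (by linarith)
  rw [ha2, hb2]
  nlinarith [sq_nonneg (x-6)]

private lemma gap3 {x c r : ℝ} (hx : 6 ≤ x) (hc2 : c^2 = 5*(x-3)) (hr2 : r^2 = 2*x-3)
    (hc : 0 < c) (hr : 0 < r) : (2*x-11)*r < (2*x-5)*c := by
  apply sq_gap hc hr (by linarith)
  rw [hc2, hr2]
  nlinarith [mul_nonneg (mul_nonneg (by linarith : (0:ℝ) ≤ x-6) (by linarith : (0:ℝ) ≤ x-6)) (by linarith : (0:ℝ) ≤ x-6), sq_nonneg (x-6)]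

set_option maxHeartbeats 4000000 in
theorem stmt18 (n : ℕ) (hn : 6 ≤ n) (t1 t2 t3 : ℝ)
    (hlt12 : t1 < t2) (hlt23 : t2 < t3)
    (h1 : g3 n t1 = 0) (h2 : g3 n t2 = 0) (h3 : g3 n t3 = 0)
    (w1 w2 z1 z2 : ℝ)
    (hw1 : w1 = -(((n : ℝ) - 3) / (2 * (2 * (n : ℝ) - 3))) -
      Real.sqrt (3 * ((n : ℝ) - 3)) / (2 * (2 * (n : ℝ) - 3) * Real.sqrt (2 * (n : ℝ) - 5)))
    (hw2 : w2 = -(((n : ℝ) - 3) / (2 * (2 * (n : ℝ) - 3))) +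
      Real.sqrt (3 * ((n : ℝ) - 3)) / (2 * (2 * (n : ℝ) - 3) * Real.sqrt (2 * (n : ℝ) - 5)))
    (hz1 : z1 = -(((n : ℝ) - 3) / (2 * (2 * (n : ℝ) - 1))) -
      Real.sqrt (5 * ((n : ℝ) - 3)) / (2 * (2 * (n : ℝ) - 1) * Real.sqrt (2 * (n : ℝ) - 3)))
    (hz2 : z2 = -(((n : ℝ) - 3) / (2 * (2 * (n : ℝ) - 1))) +
      Real.sqrt (5 * ((n : ℝ) - 3)) / (2 * (2 * (n : ℝ) - 1) * Real.sqrt (2 * (n : ℝ) - 3))) :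
    t1 < w1 ∧ w1 < z1 ∧ z1 < t2 ∧ t2 < w2 ∧ w2 < z2 ∧ z2 < t3 := by
  set x : ℝ := (n:ℝ) with hxdef
  have hx : (6:ℝ) ≤ x := by rw [hxdef]; exact_mod_cast hn
  set a : ℝ := Real.sqrt (3 * (x - 3)) with hadef
  set b : ℝ := Real.sqrt (2 * x - 5) with hbdef
  set c : ℝ := Real.sqrt (5 * (x - 3)) with hcdef
  set r : ℝ := Real.sqrt (2 * x - 3) with hrdef
  have ha2 : a^2 = 3*(x-3) := Real.sq_sqrt (by nlinarith)
  have hb2 : b^2 = 2*x-5 := Real.sq_sqrt (by nlinarith)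
  have hc2 : c^2 = 5*(x-3) := Real.sq_sqrt (by nlinarith)
  have hr2 : r^2 = 2*x-3 := Real.sq_sqrt (by nlinarith)
  have ha : 0 < a := Real.sqrt_pos.mpr (by nlinarith)
  have hb : 0 < b := Real.sqrt_pos.mpr (by nlinarith)
  have hc : 0 < c := Real.sqrt_pos.mpr (by nlinarith)
  have hr : 0 < r := Real.sqrt_pos.mpr (by nlinarith)
  have hA : (0:ℝ) < 2*x-1 := by nlinarith
  have hB : (0:ℝ) < 2*x-3 := by nlinarith
  have hC : (0:ℝ) < 2*x-5 := by nlinarith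
  -- unfolded root hypotheses
  have h1' : 8*(2*x-1)*(2*x-3)*(2*x-5)*t1^3 + 12*(x-3)*(2*x-3)*(2*x-5)*t1^2
      + 6*(x-3)*(x-4)*(2*x-5)*t1 + (x-3)*(x-4)*(x-5) = 0 := by
    simp only [g3] at h1; rw [← hxdef] at h1; linarith [h1]
  have h2' : 8*(2*x-1)*(2*x-3)*(2*x-5)*t2^3 + 12*(x-3)*(2*x-3)*(2*x-5)*t2^2
      + 6*(x-3)*(x-4)*(2*x-5)*t2 + (x-3)*(x-4)*(x-5) = 0 := by
    simp only [g3] at h2; rw [← hxdef] at h2; linarith [h2]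
  have h3' : 8*(2*x-1)*(2*x-3)*(2*x-5)*t3^3 + 12*(x-3)*(2*x-3)*(2*x-5)*t3^2
      + 6*(x-3)*(x-4)*(2*x-5)*t3 + (x-3)*(x-4)*(x-5) = 0 := by
    simp only [g3] at h3; rw [← hxdef] at h3; linarith [h3]
  -- Vieta relations
  have e12 : 8*(2*x-1)*(2*x-3)*(2*x-5)*(t1^2+t1*t2+t2^2)
      + 12*(x-3)*(2*x-3)*(2*x-5)*(t1+t2) + 6*(x-3)*(x-4)*(2*x-5) = 0 := by
    have l : (t1 - t2) * (8*(2*x-1)*(2*x-3)*(2*x-5)*(t1^2+t1*t2+t2^2)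
        + 12*(x-3)*(2*x-3)*(2*x-5)*(t1+t2) + 6*(x-3)*(x-4)*(2*x-5)) = 0 := by
      linear_combination h1' - h2'
    exact (mul_eq_zero.mp l).resolve_left (sub_ne_zero.mpr hlt12.ne)
  have e23 : 8*(2*x-1)*(2*x-3)*(2*x-5)*(t2^2+t2*t3+t3^2)
      + 12*(x-3)*(2*x-3)*(2*x-5)*(t2+t3) + 6*(x-3)*(x-4)*(2*x-5) = 0 := by
    have l : (t2 - t3) * (8*(2*x-1)*(2*x-3)*(2*x-5)*(t2^2+t2*t3+t3^2)
        + 12*(x-3)*(2*x-3)*(2*x-5)*(t2+t3) + 6*(x-3)*(x-4)*(2*x-5)) = 0 := by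
      linear_combination h2' - h3'
    exact (mul_eq_zero.mp l).resolve_left (sub_ne_zero.mpr hlt23.ne)
  have R1 : 8*(2*x-1)*(2*x-3)*(2*x-5)*(t1+t2+t3) + 12*(x-3)*(2*x-3)*(2*x-5) = 0 := by
    have l : (t1 - t3) * (8*(2*x-1)*(2*x-3)*(2*x-5)*(t1+t2+t3)
        + 12*(x-3)*(2*x-3)*(2*x-5)) = 0 := by
      linear_combination e12 - e23
    exact (mul_eq_zero.mp l).resolve_left (sub_ne_zero.mpr (hlt12.trans hlt23).ne)
  have R2 : 8*(2*x-1)*(2*x-3)*(2*x-5)*(t1*t2+t1*t3+t2*t3) - 6*(x-3)*(x-4)*(2*x-5) = 0 := by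
    linear_combination (t1+t2)*R1 - e12
  have R3 : 8*(2*x-1)*(2*x-3)*(2*x-5)*(t1*t2*t3) + (x-3)*(x-4)*(x-5) = 0 := by
    linear_combination h1' - t1^2*R1 + t1*R2
  have key : ∀ y : ℝ, g3 n y
      = 8*(2*x-1)*(2*x-3)*(2*x-5)*((y-t1)*((y-t2)*(y-t3))) := by
    intro y
    simp only [g3]; rw [← hxdef]
    linear_combination y^2 * R1 - y * R2 + R3
  -- w's are roots of q1
  have hw1' : 2*(2*x-3)*w1 + (x-3) = -(a/b) := by rw [hw1]; field_simp; ring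
  have hw2' : 2*(2*x-3)*w2 + (x-3) = a/b := by rw [hw2]; field_simp; ring
  have hz1' : 2*(2*x-1)*z1 + (x-3) = -(c/r) := by rw [hz1]; field_simp; ring
  have hz2' : 2*(2*x-1)*z2 + (x-3) = c/r := by rw [hz2]; field_simp; ring
  have kw1 : (2*x-5) * (2*(2*x-3)*w1 + (x-3))^2 = 3*(x-3) := by
    rw [hw1', neg_pow, div_pow, ha2, hb2]; field_simp
  have kw2 : (2*x-5) * (2*(2*x-3)*w2 + (x-3))^2 = 3*(x-3) := by
    rw [hw2', div_pow, ha2, hb2]; field_simp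
  have kz1 : (2*x-3) * (2*(2*x-1)*z1 + (x-3))^2 = 5*(x-3) := by
    rw [hz1', neg_pow, div_pow, hc2, hr2]; field_simp
  have kz2 : (2*x-3) * (2*(2*x-1)*z2 + (x-3))^2 = 5*(x-3) := by
    rw [hz2', div_pow, hc2, hr2]; field_simp
  have hq1w1 : 4*(2*x-3)*(2*x-5)*w1^2 + 4*(x-3)*(2*x-5)*w1 + (x-3)*(x-4) = 0 := by
    have l : (2*x-3) * (4*(2*x-3)*(2*x-5)*w1^2 + 4*(x-3)*(2*x-5)*w1 + (x-3)*(x-4))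
        = (2*x-3) * 0 := by linear_combination kw1
    exact mul_left_cancel₀ hB.ne' l
  have hq1w2 : 4*(2*x-3)*(2*x-5)*w2^2 + 4*(x-3)*(2*x-5)*w2 + (x-3)*(x-4) = 0 := by
    have l : (2*x-3) * (4*(2*x-3)*(2*x-5)*w2^2 + 4*(x-3)*(2*x-5)*w2 + (x-3)*(x-4))
        = (2*x-3) * 0 := by linear_combination kw2
    exact mul_left_cancel₀ hB.ne' l
  have hq2z1 : 4*(2*x-1)*(2*x-3)*z1^2 + 4*(x-3)*(2*x-3)*z1 + (x-3)*(x-4) = 0 := by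
    have l : (2*x-1) * (4*(2*x-1)*(2*x-3)*z1^2 + 4*(x-3)*(2*x-3)*z1 + (x-3)*(x-4))
        = (2*x-1) * 0 := by linear_combination kz1
    exact mul_left_cancel₀ hA.ne' l
  have hq2z2 : 4*(2*x-1)*(2*x-3)*z2^2 + 4*(x-3)*(2*x-3)*z2 + (x-3)*(x-4) = 0 := by
    have l : (2*x-1) * (4*(2*x-1)*(2*x-3)*z2^2 + 4*(x-3)*(2*x-3)*z2 + (x-3)*(x-4))
        = (2*x-1) * 0 := by linear_combination kz2
    exact mul_left_cancel₀ hA.ne' l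
  -- linear-form sign computations
  have key1 : (2*x-3)*b*(2*(2*x-5)*w1 + (x-4)) = -3*b - (2*x-5)*a := by
    rw [hw1]; field_simp; ring
  have key2 : (2*x-3)*b*(2*(2*x-5)*w2 + (x-4)) = -3*b + (2*x-5)*a := by
    rw [hw2]; field_simp; ring
  have key3 : (2*x-3)*b*(2*(2*x-7)*w1 + (x-4)) = (2*x-9)*b - (2*x-7)*a := by
    rw [hw1]; field_simp; ring
  have key4 : (2*x-3)*b*(2*(2*x-7)*w2 + (x-4)) = (2*x-9)*b + (2*x-7)*a := by
    rw [hw2]; field_simp; ring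
  have key5 : (2*x-1)*r*(2*(2*x-5)*z1 + (x-4)) = (2*x-11)*r - (2*x-5)*c := by
    rw [hz1]; field_simp; ring
  have key6 : (2*x-1)*r*(2*(2*x-5)*z2 + (x-4)) = (2*x-11)*r + (2*x-5)*c := by
    rw [hz2]; field_simp; ring
  have hBb : 0 < (2*x-3)*b := mul_pos hB hb
  have hAr : 0 < (2*x-1)*r := mul_pos hA hr
  have Sw1 : 2*(2*x-5)*w1 + (x-4) < 0 := by
    apply aux_neg hBb; rw [key1]; linarith [mul_pos hC ha]
  have Sw2 : 0 < 2*(2*x-5)*w2 + (x-4) := by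
    apply aux_pos hBb; rw [key2]; linarith [gap2 hx ha2 hb2 ha hb]
  have Sw3 : 2*(2*x-7)*w1 + (x-4) < 0 := by
    apply aux_neg hBb; rw [key3]; linarith [gap1 hx ha2 hb2 ha hb]
  have Sw4 : 0 < 2*(2*x-7)*w2 + (x-4) := by
    apply aux_pos hBb; rw [key4]
    linarith [mul_pos (show (0:ℝ) < 2*x-9 by linarith) hb, mul_pos (show (0:ℝ) < 2*x-7 by linarith) ha]
  have Sz1 : 2*(2*x-5)*z1 + (x-4) < 0 := by
    apply aux_neg hAr; rw [key5]; linarith [gap3 hx hc2 hr2 hc hr]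
  have Sz2 : 0 < 2*(2*x-5)*z2 + (x-4) := by
    apply aux_pos hAr; rw [key6]
    linarith [mul_pos (show (0:ℝ) < 2*x-11 by linarith) hr, mul_pos hC hc]
  -- sign of g3 at the four points
  have hg3w1 : (2*x-3) * g3 n w1 = -6*(x-3)*(2*(2*x-7)*w1 + (x-4)) := by
    simp only [g3]; rw [← hxdef]
    linear_combination (2*(2*x-1)*(2*x-3)*w1 + (x-3)*(2*x-7)) * hq1w1
  have hg3w2 : (2*x-3) * g3 n w2 = -6*(x-3)*(2*(2*x-7)*w2 + (x-4)) := by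
    simp only [g3]; rw [← hxdef]
    linear_combination (2*(2*x-1)*(2*x-3)*w2 + (x-3)*(2*x-7)) * hq1w2
  have hg3z1 : (2*x-1) * g3 n z1 = -10*(x-3)*(2*(2*x-5)*z1 + (x-4)) := by
    simp only [g3]; rw [← hxdef]
    linear_combination (2*(2*x-1)*(2*x-5)*z1 + (x-3)*(2*x-5)) * hq2z1
  have hg3z2 : (2*x-1) * g3 n z2 = -10*(x-3)*(2*(2*x-5)*z2 + (x-4)) := by
    simp only [g3]; rw [← hxdef]
    linear_combination (2*(2*x-1)*(2*x-5)*z2 + (x-3)*(2*x-5)) * hq2z2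
  have G1 : 0 < g3 n w1 := aux_pos hB (by rw [hg3w1]; linarith [mul_pos (show (0:ℝ) < 6*(x-3) by linarith) (neg_pos.mpr Sw3)])
  have G2 : g3 n w2 < 0 := aux_neg hB (by rw [hg3w2]; linarith [mul_pos (show (0:ℝ) < 6*(x-3) by linarith) Sw4])
  have G3 : 0 < g3 n z1 := aux_pos hA (by rw [hg3z1]; linarith [mul_pos (show (0:ℝ) < 10*(x-3) by linarith) (neg_pos.mpr Sz1)])
  have G4 : g3 n z2 < 0 := aux_neg hA (by rw [hg3z2]; linarith [mul_pos (show (0:ℝ) < 10*(x-3) by linarith) Sz2])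
  -- q2 at w1, w2
  have hq2w1 : (2*x-5) * (4*(2*x-1)*(2*x-3)*w1^2 + 4*(x-3)*(2*x-3)*w1 + (x-3)*(x-4))
      = -4*(x-3)*(2*(2*x-5)*w1 + (x-4)) := by linear_combination (2*x-1) * hq1w1
  have hq2w2 : (2*x-5) * (4*(2*x-1)*(2*x-3)*w2^2 + 4*(x-3)*(2*x-3)*w2 + (x-3)*(x-4))
      = -4*(x-3)*(2*(2*x-5)*w2 + (x-4)) := by linear_combination (2*x-1) * hq1w2
  -- factor q2 through its roots z1 z2
  have efac : ∀ w : ℝ, 4*(2*x-1)^2*(2*x-3)*((w-z1)*(w-z2))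
      = (2*x-1)*(4*(2*x-1)*(2*x-3)*w^2 + 4*(x-3)*(2*x-3)*w + (x-3)*(x-4)) := by
    intro w
    have e1 : 2*(2*x-1)*r*(w - z1) = (2*(2*x-1)*w + (x-3))*r + c := by
      rw [hz1]; field_simp; ring
    have e2 : 2*(2*x-1)*r*(w - z2) = (2*(2*x-1)*w + (x-3))*r - c := by
      rw [hz2]; field_simp; ring
    have e12' : (2*(2*x-1)*r*(w - z1)) * (2*(2*x-1)*r*(w - z2))
        = ((2*(2*x-1)*w + (x-3))*r + c) * ((2*(2*x-1)*w + (x-3))*r - c) := by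
      rw [e1, e2]
    linear_combination e12' - (4*(2*x-1)^2*((w-z1)*(w-z2)) - (2*(2*x-1)*w + (x-3))^2) * hr2 - hc2
  have F1 : 0 < (w1-z1)*(w1-z2) := by
    apply aux_pos (by positivity : (0:ℝ) < 4*(2*x-1)^2*(2*x-3))
    rw [efac w1]
    apply mul_pos hA
    apply aux_pos hC
    rw [hq2w1]; linarith [mul_pos (show (0:ℝ) < 4*(x-3) by linarith) (neg_pos.mpr Sw1)]
  have F2 : (w2-z1)*(w2-z2) < 0 := by
    apply aux_neg (by positivity : (0:ℝ) < 4*(2*x-1)^2*(2*x-3))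
    rw [efac w2]
    apply mul_neg_of_pos_of_neg hA
    apply aux_neg hC
    rw [hq2w2]; linarith [mul_pos (show (0:ℝ) < 4*(x-3) by linarith) Sw2]
  -- cubic products
  have h8 : (0:ℝ) < 8*(2*x-1)*(2*x-3)*(2*x-5) := by positivity
  have P3 : 0 < (w1-t1)*((w1-t2)*(w1-t3)) := by
    apply aux_pos h8; rw [← key w1]; exact G1
  have P4 : (w2-t1)*((w2-t2)*(w2-t3)) < 0 := by
    apply aux_neg h8; rw [← key w2]; exact G2
  have P5 : 0 < (z1-t1)*((z1-t2)*(z1-t3)) := by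
    apply aux_pos h8; rw [← key z1]; exact G3
  have P6 : (z2-t1)*((z2-t2)*(z2-t3)) < 0 := by
    apply aux_neg h8; rw [← key z2]; exact G4
  -- simple orderings
  have hw12 : w1 < w2 := by
    rw [hw1, hw2]
    have : 0 < a / (2*(2*x-3)*b) := by positivity
    linarith
  have hz12 : z1 < z2 := by
    rw [hz1, hz2]
    have : 0 < c / (2*(2*x-1)*r) := by positivity
    linarith
  -- interlacing from F1, F2
  have o4' : z1 < w2 := by
    by_contra h; push_neg at h
    linarith [mul_nonneg (by linarith : (0:ℝ) ≤ z1 - w2) (by linarith : (0:ℝ) ≤ z2 - w2), F2]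
  have o5 : w2 < z2 := by
    by_contra h; push_neg at h
    linarith [mul_nonneg (by linarith : (0:ℝ) ≤ w2 - z1) (by linarith : (0:ℝ) ≤ w2 - z2), F2]
  have hwz2 : w1 < z2 := hw12.trans o5
  have o2 : w1 < z1 := by
    by_contra h; push_neg at h
    linarith [mul_nonneg (by linarith : (0:ℝ) ≤ w1 - z1) (by linarith : (0:ℝ) ≤ z2 - w1), F1]
  -- locate against t's
  have o6 : z2 < t3 := by
    by_contra h; push_neg at h
    linarith [mul_nonneg (mul_nonneg (by linarith : (0:ℝ) ≤ z2 - t1) (by linarith : (0:ℝ) ≤ z2 - t2)) (by linarith : (0:ℝ) ≤ z2 - t3), P6]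
  have o1 : t1 < w1 := by
    by_contra h; push_neg at h
    linarith [mul_nonneg (mul_nonneg (by linarith : (0:ℝ) ≤ t1 - w1) (by linarith : (0:ℝ) ≤ t2 - w1)) (by linarith : (0:ℝ) ≤ t3 - w1), P3]
  have o3 : z1 < t2 := by
    by_contra h; push_neg at h
    have hz1t3 : z1 < t3 := by linarith
    linarith [mul_nonneg (mul_nonneg (by linarith : (0:ℝ) ≤ z1 - t1) (by linarith : (0:ℝ) ≤ z1 - t2)) (by linarith : (0:ℝ) ≤ t3 - z1), P5]
  have o4 : t2 < w2 := by
    by_contra h; push_neg at h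
    linarith [mul_nonneg (mul_nonneg (by linarith : (0:ℝ) ≤ w2 - t1) (by linarith : (0:ℝ) ≤ t2 - w2)) (by linarith : (0:ℝ) ≤ t3 - w2), P4]
  exact ⟨o1, o2, o3, o4, o5, o6⟩
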